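/- Let K be a field, r ≥ 1, and let a, b : ℕʳ → K be r-sequences with a C-finite and b rational. Then the Hadamard product ab : ℕʳ → K, defined by (ab)(n) = a(n)·b(n), is rational. -/

import Mathlib

/-- The Hilbert series of an `r`-sequence `a : ℕʳ → K`, i.e. the multivariate formal
power series `Σ_{n ∈ ℕʳ} a(n)·t₁^{n₁}⋯t_r^{n_r}`. -/
def hilbertSeries {K : Type*} [Field K] {r : ℕ} (a : (Fin r → ℕ) → K) :
    MvPowerSeries (Fin r) K :=
  fun d => a d

/-- The shift `Sᵐa` of an `r`-sequence `a : ℕʳ → K` by `m ∈ ℕʳ`: `n ↦ a (n + m)`. -/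
def mshift {K : Type*} [Field K] {r : ℕ} (a : (Fin r → ℕ) → K) (m : Fin r → ℕ) :
    (Fin r → ℕ) → K :=
  fun n => a (n + m)

/-- An `r`-sequence is C-finite if the `K`-linear span of all its shifts `Sᵐa`, `m ∈ ℕʳ`,
inside `K^(ℕʳ)` is finite-dimensional. -/
def IsCFinite (K : Type*) [Field K] {r : ℕ} (a : (Fin r → ℕ) → K) : Prop :=
  FiniteDimensional K (Submodule.span K (Set.range (mshift a)))

/-- An `r`-sequence is rational if there are polynomials `P, Q ∈ K[t₁,…,t_r]` with `Q`
having nonzero constant term such that `H_a · Q = P` in `K[[t₁,…,t_r]]`. -/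
def IsRationalMSeq {K : Type*} [Field K] {r : ℕ} (a : (Fin r → ℕ) → K) : Prop :=
  ∃ P Q : MvPolynomial (Fin r) K, MvPolynomial.coeff 0 Q ≠ 0 ∧
    hilbertSeries a * (Q : MvPowerSeries (Fin r) K) = (P : MvPowerSeries (Fin r) K)

/-!
The shifts of a C-finite sequence `a` span a finite-dimensional space `V`, on which shifting by
`n` acts by a matrix `Aₙ` with `A₀ = 1` and `A_{u+v} = A_u A_v`; reading off the value at `0`
gives `a n = w ⬝ᵥ Aₙ *ᵥ c`. If `H_b Q = P`, multiplicativity turns this into the matrix identity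
`Φ · Q(t·A) = P(t·A)` for `Φ = Σₙ b(n) Aₙ tⁿ`, so `det Q(t·A) · Φ = P(t·A) · adj Q(t·A)` is a
polynomial matrix, and `det Q(t·A)` has constant term `Q(0)^d ≠ 0`. So `det Q(t·A)` is a common
denominator for the entries of `Φ`, hence for `H_{ab} = w ⬝ᵥ Φ *ᵥ c`.
-/

open scoped Matrix

section Shift

variable {K : Type*} [Field K] {r : ℕ}

noncomputable def mshiftₗ (m : Fin r → ℕ) : ((Fin r → ℕ) → K) →ₗ[K] ((Fin r → ℕ) → K) :=
  LinearMap.funLeft K K (· + m)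

lemma mshiftₗ_apply (m : Fin r → ℕ) (x : (Fin r → ℕ) → K) : mshiftₗ m x = mshift x m := rfl

lemma mshiftₗ_mem_span_range_mshift {a x : (Fin r → ℕ) → K}
    (hx : x ∈ Submodule.span K (Set.range (mshift a))) (m : Fin r → ℕ) :
    mshiftₗ m x ∈ Submodule.span K (Set.range (mshift a)) := by
  suffices h : (Submodule.span K (Set.range (mshift a))).map (mshiftₗ m) ≤
      Submodule.span K (Set.range (mshift a)) from h ⟨x, hx, rfl⟩
  rw [Submodule.map_span, ← Set.range_comp]
  refine Submodule.span_mono (Set.range_subset_iff.2 fun m' => ⟨m + m', funext fun n => ?_⟩)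
  simp [mshiftₗ_apply, mshift, add_assoc]

theorem IsCFinite.exists_eq_dotProduct_mulVec {a : (Fin r → ℕ) → K} (ha : IsCFinite K a) :
    ∃ (d : ℕ) (A : (Fin r → ℕ) → Matrix (Fin d) (Fin d) K) (w c : Fin d → K),
      A 0 = 1 ∧ (∀ u v, A (u + v) = A u * A v) ∧ a = fun n => w ⬝ᵥ A n *ᵥ c := by
  set V := Submodule.span K (Set.range (mshift a))
  have : FiniteDimensional K V := ha
  let B := Module.finBasis K V
  let T : (Fin r → ℕ) → Module.End K V := fun m =>
    (mshiftₗ m).restrict fun _ hx => mshiftₗ_mem_span_range_mshift hx m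
  have hT : ∀ m (x : V) n, (T m x : (Fin r → ℕ) → K) n = (x : (Fin r → ℕ) → K) (n + m) :=
    fun _ _ _ => rfl
  have haV : a ∈ V := Submodule.subset_span ⟨0, funext fun n => by simp [mshift]⟩
  have eval_zero (y : V) :
      (y : (Fin r → ℕ) → K) 0 = (fun j => (B j : (Fin r → ℕ) → K) 0) ⬝ᵥ B.repr y := by
    conv_lhs => rw [← B.sum_repr y]
    simp [dotProduct, mul_comm, -Module.Basis.sum_repr]
  refine ⟨_, fun m => LinearMap.toMatrix B B (T m), fun j => (B j : (Fin r → ℕ) → K) 0,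
    B.repr ⟨a, haV⟩, ?_, fun u v => ?_, funext fun n => ?_⟩
  · have hT0 : T 0 = LinearMap.id := by ext; simp [hT]
    simp only [hT0, LinearMap.toMatrix_id]
  · have hTadd : T (u + v) = T u ∘ₗ T v := by ext; simp [hT, add_assoc]
    simp only [hTadd, LinearMap.toMatrix_comp B B B]
  · rw [LinearMap.toMatrix_mulVec_repr B B, ← eval_zero, hT, zero_add]

end Shift

section MatrixSubstitution

open MvPolynomial Finset

variable {K : Type*} [Field K] {r : ℕ} {ι : Type*}

@[simp]
lemma coeff_hilbertSeries (x : (Fin r → ℕ) → K) (e : Fin r →₀ ℕ) :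
    MvPowerSeries.coeff e (hilbertSeries x) = x e := rfl

lemma coeff_hilbertSeries_mul_coe (x : (Fin r → ℕ) → K) (R : MvPolynomial (Fin r) K)
    (e : Fin r →₀ ℕ) :
    MvPowerSeries.coeff e (hilbertSeries x * (R : MvPowerSeries (Fin r) K)) =
      ∑ p ∈ antidiagonal e, x p.1 * R.coeff p.2 := by
  simp only [MvPowerSeries.coeff_mul, MvPolynomial.coeff_coe]
  rfl

/-- `R(t₁A₁,…,t_rA_r)` when `A n = A₁^{n₁}⋯A_r^{n_r}`. -/
noncomputable def substMatrix (A : (Fin r → ℕ) → Matrix ι ι K) (R : MvPolynomial (Fin r) K) :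
    Matrix ι ι (MvPolynomial (Fin r) K) :=
  Matrix.of fun j k => ∑ m ∈ R.support, monomial m (R.coeff m * A m j k)

noncomputable def hilbertMatrix (b : (Fin r → ℕ) → K) (A : (Fin r → ℕ) → Matrix ι ι K) :
    Matrix ι ι (MvPowerSeries (Fin r) K) :=
  Matrix.of fun j k => hilbertSeries fun n => b n * A n j k

variable {A : (Fin r → ℕ) → Matrix ι ι K} {b : (Fin r → ℕ) → K}

lemma coeff_substMatrix (R : MvPolynomial (Fin r) K) (j k : ι) (u : Fin r →₀ ℕ) :
    (substMatrix A R j k).coeff u = R.coeff u * A u j k := by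
  classical
  simp only [substMatrix, Matrix.of_apply, coeff_sum, coeff_monomial, Finset.sum_ite_eq',
    mem_support_iff, ite_eq_left_iff, not_not]
  intro h
  rw [h, zero_mul]

lemma constantCoeff_det_substMatrix [Fintype ι] [DecidableEq ι] (hA0 : A 0 = 1)
    (R : MvPolynomial (Fin r) K) :
    (substMatrix A R).det.coeff 0 = R.coeff 0 ^ Fintype.card ι := by
  have h : (substMatrix A R).map constantCoeff = R.coeff 0 • (1 : Matrix ι ι K) := by
    ext j k
    simp [constantCoeff_eq, coeff_substMatrix, hA0, Matrix.one_apply]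
  rw [← constantCoeff_eq, RingHom.map_det, RingHom.mapMatrix_apply, h, Matrix.det_smul,
    Matrix.det_one, mul_one, constantCoeff_eq]

lemma hilbertMatrix_mul_substMatrix [Fintype ι] (hA : ∀ u v, A (u + v) = A u * A v)
    {P Q : MvPolynomial (Fin r) K} (hPQ : hilbertSeries b * (Q : MvPowerSeries (Fin r) K) = P) :
    hilbertMatrix b A * (substMatrix A Q).map coeToMvPowerSeries.ringHom =
      (substMatrix A P).map coeToMvPowerSeries.ringHom := by
  ext j l e
  have hAe : ∀ p ∈ antidiagonal e, A p.1 * A p.2 = A e := fun p hp => by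
    rw [← hA, ← Finsupp.coe_add, mem_antidiagonal.1 hp]
  calc MvPowerSeries.coeff e
        ((hilbertMatrix b A * (substMatrix A Q).map coeToMvPowerSeries.ringHom) j l)
      = ∑ k, ∑ p ∈ antidiagonal e, b p.1 * A p.1 j k * (Q.coeff p.2 * A p.2 k l) := by
        simp only [Matrix.mul_apply, map_sum, Matrix.map_apply,
          coeToMvPowerSeries.ringHom_apply, hilbertMatrix, Matrix.of_apply,
          coeff_hilbertSeries_mul_coe, coeff_substMatrix]
    _ = ∑ p ∈ antidiagonal e, b p.1 * Q.coeff p.2 * A e j l := by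
        rw [Finset.sum_comm]
        refine Finset.sum_congr rfl fun p hp => ?_
        rw [← hAe p hp, Matrix.mul_apply, Finset.mul_sum]
        exact Finset.sum_congr rfl fun k _ => by ring
    _ = MvPowerSeries.coeff e ((substMatrix A P).map coeToMvPowerSeries.ringHom j l) := by
        rw [← Finset.sum_mul, ← coeff_hilbertSeries_mul_coe, hPQ]
        simp only [Matrix.map_apply, coeToMvPowerSeries.ringHom_apply,
          MvPolynomial.coeff_coe, coeff_substMatrix]

lemma det_smul_hilbertMatrix [Fintype ι] [DecidableEq ι] (hA : ∀ u v, A (u + v) = A u * A v)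
    {P Q : MvPolynomial (Fin r) K} (hPQ : hilbertSeries b * (Q : MvPowerSeries (Fin r) K) = P) :
    ((substMatrix A Q).det : MvPowerSeries (Fin r) K) • hilbertMatrix b A =
      (substMatrix A P * (substMatrix A Q).adjugate).map coeToMvPowerSeries.ringHom := by
  have hadj := coeToMvPowerSeries.ringHom.map_adjugate (substMatrix A Q)
  have hdet := coeToMvPowerSeries.ringHom.map_det (substMatrix A Q)
  simp only [RingHom.mapMatrix_apply, coeToMvPowerSeries.ringHom_apply] at hadj hdet
  rw [Matrix.map_mul, hadj, ← hilbertMatrix_mul_substMatrix hA hPQ, Matrix.mul_assoc,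
    Matrix.mul_adjugate, ← hdet, Matrix.mul_smul, Matrix.mul_one]

lemma hilbertSeries_dotProduct_mulVec_mul [Fintype ι] (w c : ι → K) :
    hilbertSeries (fun n => (w ⬝ᵥ A n *ᵥ c) * b n) =
      (MvPowerSeries.C ∘ w) ⬝ᵥ hilbertMatrix b A *ᵥ (MvPowerSeries.C ∘ c) := by
  ext e
  simp only [coeff_hilbertSeries, hilbertMatrix, dotProduct, Matrix.mulVec, map_sum,
    Function.comp_apply, MvPowerSeries.coeff_C_mul, MvPowerSeries.coeff_mul_C, Matrix.of_apply,
    Finset.mul_sum, Finset.sum_mul]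
  exact Finset.sum_congr rfl fun _ _ => Finset.sum_congr rfl fun _ _ => by ring

theorem isRationalMSeq_dotProduct_mulVec_mul [Fintype ι] [DecidableEq ι] (hA0 : A 0 = 1)
    (hA : ∀ u v, A (u + v) = A u * A v) (hb : IsRationalMSeq b) (w c : ι → K) :
    IsRationalMSeq fun n => (w ⬝ᵥ A n *ᵥ c) * b n := by
  obtain ⟨P, Q, hQ, hPQ⟩ := hb
  refine ⟨(C ∘ w) ⬝ᵥ (substMatrix A P * (substMatrix A Q).adjugate) *ᵥ (C ∘ c),
    (substMatrix A Q).det, ?_, ?_⟩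
  · rw [constantCoeff_det_substMatrix hA0]
    exact pow_ne_zero _ hQ
  · have hC : coeToMvPowerSeries.ringHom ∘ C = (MvPowerSeries.C : K → MvPowerSeries (Fin r) K) :=
      funext coe_C
    rw [hilbertSeries_dotProduct_mulVec_mul, mul_comm, ← smul_eq_mul, ← dotProduct_smul,
      ← Matrix.smul_mulVec, det_smul_hilbertMatrix hA hPQ, ← coeToMvPowerSeries.ringHom_apply,
      RingHom.map_dotProduct, ← Function.comp_assoc, hC]
    congr 1
    funext j
    rw [Function.comp_apply, RingHom.map_mulVec, ← Function.comp_assoc, hC]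

end MatrixSubstitution

theorem hadamard_cfinite_mul_rational_general {K : Type*} [Field K] {r : ℕ}
    (a b : (Fin r → ℕ) → K) (ha : IsCFinite K a) (hb : IsRationalMSeq b) :
    IsRationalMSeq (fun n => a n * b n) := by
  obtain ⟨d, A, w, c, hA0, hA, rfl⟩ := ha.exists_eq_dotProduct_mulVec
  exact isRationalMSeq_dotProduct_mulVec_mul hA0 hA hb w c

/-- the Hadamard product of a C-finite `r`-sequence and a rational
`r`-sequence is rational. -/
theorem hadamard_cfinite_mul_rational {K : Type*} [Field K] {r : ℕ} (hr : 1 ≤ r)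
    (a b : (Fin r → ℕ) → K) (ha : IsCFinite K a) (hb : IsRationalMSeq b) :
    IsRationalMSeq (fun n => a n * b n) :=
  hadamard_cfinite_mul_rational_general a b ha hb
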